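/- Under majority dynamics on Z², consider the infinite path construction from the enhancement argument: let x₀, x₁, x₂, … be a nearest-neighbor path, and suppose the path decomposes into maximal blocks {x_i, …, x_{i+k}} of consecutive sites, where within each block every site has value 1 at time 0, the first and last sites of each block have no clock ring in [0,t], and between consecutive blocks there is a single 'enhanced' site y whose clock rings before t while all four of y's neighbors' clocks ring only after t, and at least three of y's neighbors have value 1 at time 0. Then at time t, every site x_j with j ≥ j₀ (for j₀ the first enhanced index) has value 1 in η_t, so {x_{j₀}, x_{j₀+1}, …} is an open path at time t. -/

import Mathlib

/-- A site configuration on `ℤ²`: `true` means open (opinion 1). -/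
abbrev Config := (ℤ × ℤ) → Bool

/-- Nearest-neighbor adjacency in `ℤ²`. -/
def Adj (x y : ℤ × ℤ) : Prop := (x.1 - y.1).natAbs + (x.2 - y.2).natAbs = 1

/-- `f 0, …, f n` is a nearest-neighbor path of open sites of `η`. -/
def OpenPath (η : Config) (n : ℕ) (f : ℕ → ℤ × ℤ) : Prop :=
  (∀ i < n, Adj (f i) (f (i + 1))) ∧ ∀ i ≤ n, η (f i) = true

/-- `η` contains an infinite nearest-neighbor connected component of open sites
(equivalently, an infinite self-avoiding open path). -/
def Percolates (η : Config) : Prop :=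
  ∃ f : ℕ → ℤ × ℤ, Function.Injective f ∧ (∀ i, Adj (f i) (f (i + 1))) ∧ ∀ i, η (f i) = true

/-- The origin-type connection: there is an infinite self-avoiding open path starting at `x₀`. -/
def ConnectsToInfinity (η : Config) (x₀ : ℤ × ℤ) : Prop :=
  ∃ f : ℕ → ℤ × ℤ, f 0 = x₀ ∧ Function.Injective f ∧ (∀ i, Adj (f i) (f (i + 1))) ∧
    ∀ i, η (f i) = true

/-- Membership in the rectangle `[a₁, b₁] × [a₂, b₂]`. -/
def InRect (a b x : ℤ × ℤ) : Prop := a.1 ≤ x.1 ∧ x.1 ≤ b.1 ∧ a.2 ≤ x.2 ∧ x.2 ≤ b.2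

/-- `H(a,b)`: an open left-right crossing of the rectangle `[1,a] × [1,b]`. -/
def Crossing (a b : ℕ) (η : Config) : Prop :=
  ∃ n f, OpenPath η n f ∧ (∀ i ≤ n, InRect (1, 1) ((a : ℤ), (b : ℤ)) (f i)) ∧
    (f 0).1 = 1 ∧ (f n).1 = (a : ℤ)

/-- Membership in the box `[−m, m]²`. -/
def InBox (m : ℕ) (x : ℤ × ℤ) : Prop := |x.1| ≤ (m : ℤ) ∧ |x.2| ≤ (m : ℤ)

/-- `f 0, …, f n` is a closed nearest-neighbor loop. -/
def IsLoop (f : ℕ → ℤ × ℤ) (n : ℕ) : Prop := (∀ i < n, Adj (f i) (f (i + 1))) ∧ f n = f 0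

/-- The loop `f 0, …, f n` surrounds the box `[−m,m]²`: every nearest-neighbor path started
in the box that leaves every box must meet the loop. -/
def Surrounds (f : ℕ → ℤ × ℤ) (n m : ℕ) : Prop :=
  ∀ g : ℕ → ℤ × ℤ, InBox m (g 0) → (∀ i, Adj (g i) (g (i + 1))) →
    (∀ N : ℕ, ∃ i, ¬ InBox N (g i)) → ∃ i j, j ≤ n ∧ g i = f j

/-- `Cir(m,n)`: there is an open circuit surrounding `[−m,m]²` contained in `[−n,n]²`. -/
def Circuit (m n : ℕ) (η : Config) : Prop :=
  ∃ k f, IsLoop f k ∧ (∀ j ≤ k, InBox n (f j) ∧ η (f j) = true) ∧ Surrounds f k m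

/-- An increasing (monotone) event of configurations. -/
def IncreasingEvent (A : Set Config) : Prop :=
  ∀ η η' : Config, (∀ x, η x = true → η' x = true) → η ∈ A → η' ∈ A

/-- Positive association (FKG inequality) for a measure on configurations. -/
def PositivelyAssociated (μ : MeasureTheory.Measure Config) : Prop :=
  ∀ A B : Set Config, MeasurableSet A → MeasurableSet B →
    IncreasingEvent A → IncreasingEvent B → μ A * μ B ≤ μ (A ∩ B)

/-- The four nearest neighbors of a site. -/
def nbrs (x : ℤ × ℤ) : List (ℤ × ℤ) :=
  [(x.1 + 1, x.2), (x.1 - 1, x.2), (x.1, x.2 + 1), (x.1, x.2 - 1)]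

/-- The number of neighbors of `x` with opinion 1 in the configuration `η`. -/
def onesCount (η : Config) (x : ℤ × ℤ) : ℕ := (nbrs x).countP (fun y => η y)

/-- The majority update rule at `x`: adopt the majority opinion among the four neighbors,
keeping the current opinion in case of a tie. -/
def majUpdate (η : Config) (x : ℤ × ℤ) : Bool :=
  if 3 ≤ onesCount η x then true else if onesCount η x ≤ 1 then false else η x

/-- `F : ℝ → Config` is a trajectory of majority dynamics with clock ring times `R x` at each
site `x`: the opinion of `x` is constant on time intervals containing no ring of `x`, and at
each ring time the opinion of `x` becomes the majority opinion of the configuration just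
before the ring. -/
def IsMajorityTrajectory (R : (ℤ × ℤ) → Set ℝ) (F : ℝ → Config) : Prop :=
  (∀ x : ℤ × ℤ, ∀ s₁ s₂ : ℝ, 0 ≤ s₁ → s₁ ≤ s₂ →
    (∀ r ∈ R x, r ≤ s₁ ∨ s₂ < r) → F s₂ x = F s₁ x) ∧
  (∀ x : ℤ × ℤ, ∀ r ∈ R x, 0 < r →
    ∃ ε > (0 : ℝ), ∀ s : ℝ, r - ε < s → s < r → F r x = majUpdate (F s) x)

open Set

/-!
Enhanced sites and the end sites of the blocks have no neighbour that changes before `t`. An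
enhanced site therefore sees at least three open neighbours at each of its rings, so it is open
after its last ring before `t`. The end sites of a block do not ring and stay open; an interior
site always has its two path neighbours open, so at a ring it sees at worst a tie and keeps its
opinion. Inducting over the finitely many ring times of the block shows that it stays open up to
time `t`.
-/

def ConstantBetweenRings {ι α : Type*} (R : ι → Set ℝ) (F : ℝ → ι → α) : Prop :=
  ∀ x : ι, ∀ s₁ s₂ : ℝ, 0 ≤ s₁ → s₁ ≤ s₂ → (∀ r ∈ R x, r ≤ s₁ ∨ s₂ < r) → F s₂ x = F s₁ x

namespace ConstantBetweenRings

variable {ι α : Type*} {R : ι → Set ℝ} {F : ℝ → ι → α}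

theorem eq_of_forall_notMem_Ioc (hF : ConstantBetweenRings R F) {x : ι} {u s : ℝ}
    (hu : 0 ≤ u) (hus : u ≤ s) (h : ∀ r ∈ R x, r ∉ Ioc u s) : F s x = F u x :=
  hF x u s hu hus fun r hr => by
    have := h r hr
    rw [mem_Ioc, not_and_or, not_lt, not_le] at this
    tauto

theorem eq_zero_of_quiet (hF : ConstantBetweenRings R F) {x : ι} {t s : ℝ}
    (hquiet : ∀ r ∈ R x, r ∉ Icc 0 t) (hs : s ∈ Icc 0 t) : F s x = F 0 x :=
  hF.eq_of_forall_notMem_Ioc le_rfl hs.1 fun r hr hr' =>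
    hquiet r hr ⟨hr'.1.le, hr'.2.trans hs.2⟩

theorem exists_last_ring (hF : ConstantBetweenRings R F) {x : ι} {t r₀ : ℝ}
    (hfin : (R x ∩ Icc 0 t).Finite) (hr₀ : r₀ ∈ R x) (hr₀t : r₀ ∈ Ioc 0 t) :
    ∃ r ∈ R x, r ∈ Ioc 0 t ∧ F t x = F r x := by
  have hfin' : (R x ∩ Ioc 0 t).Finite := hfin.subset fun r hr => ⟨hr.1, hr.2.1.le, hr.2.2⟩
  obtain ⟨r, ⟨hr, hrt⟩, hmax⟩ := hfin'.exists_maximal ⟨r₀, hr₀, hr₀t⟩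
  refine ⟨r, hr, hrt, hF.eq_of_forall_notMem_Ioc hrt.1.le hrt.2 fun r' hr' hr't => ?_⟩
  have := hmax ⟨hr', hrt.1.trans hr't.1, hr't.2⟩ hr't.1.le
  linarith [hr't.1]

theorem forall_true_of_rings_preserve {F : ℝ → ι → Bool} (hF : ConstantBetweenRings R F)
    (S : Finset ι) {t : ℝ} (hfin : ∀ x ∈ S, (R x ∩ Icc 0 t).Finite)
    (h₀ : ∀ x ∈ S, F 0 x = true)
    (hstep : ∀ x ∈ S, ∀ r ∈ R x, r ∈ Ioc 0 t →
      (∀ u ∈ Ico 0 r, ∀ y ∈ S, F u y = true) → F r x = true) :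
    ∀ s ∈ Icc 0 t, ∀ x ∈ S, F s x = true := by
  classical
  suffices key : ∀ T : Finset ℝ, ∀ s ∈ Icc 0 t,
      (∀ x ∈ S, ∀ r ∈ R x, r ∈ Ioc 0 s → r ∈ T) → ∀ x ∈ S, F s x = true by
    have hT : (⋃ x ∈ S, R x ∩ Icc 0 t).Finite := S.finite_toSet.biUnion hfin
    intro s hs
    refine key hT.toFinset s hs fun x hx r hr hrs => hT.mem_toFinset.2 ?_
    exact mem_biUnion hx ⟨hr, hrs.1.le, hrs.2.trans hs.2⟩
  intro T
  induction T using Finset.induction_on_max with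
  | empty =>
    intro s hs hcov x hx
    have hconst : F s x = F 0 x :=
      hF.eq_of_forall_notMem_Ioc le_rfl hs.1 fun r hr hrs => by simpa using hcov x hx r hr hrs
    exact hconst ▸ h₀ x hx
  | insert a T hlt ih =>
    intro s hs hcov
    have hcov' : ∀ u ≤ s, u < a → ∀ x ∈ S, ∀ r ∈ R x, r ∈ Ioc 0 u → r ∈ T :=
      fun u hus hua x hx r hr hru => by
        rcases Finset.mem_insert.1 (hcov x hx r hr ⟨hru.1, hru.2.trans hus⟩) with rfl | h
        · linarith [hru.2]
        · exact h
    by_cases ha : a ∈ Ioc 0 s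
    swap
    · exact ih s hs fun x hx r hr hrs =>
        (Finset.mem_insert.1 (hcov x hx r hr hrs)).resolve_left (by rintro rfl; exact ha hrs)
    have before : ∀ u ∈ Ico 0 a, ∀ y ∈ S, F u y = true := fun u hu =>
      ih u ⟨hu.1, (hu.2.trans_le ha.2).le.trans hs.2⟩
        (hcov' u (hu.2.trans_le ha.2).le hu.2)
    intro x hx
    have at_a : F a x = true := by
      by_cases hax : a ∈ R x
      · exact hstep x hx a hax ⟨ha.1, ha.2.trans hs.2⟩ before
      set m := (insert 0 T).max' (Finset.insert_nonempty _ _)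
      have hm0 : 0 ≤ m := Finset.le_max' _ _ (Finset.mem_insert_self _ _)
      have hma : m < a := by
        have hm : m ∈ insert 0 T := Finset.max'_mem _ _
        rcases Finset.mem_insert.1 hm with h | h
        · rw [h]; exact ha.1
        · exact hlt m h
      have hconst : F a x = F m x := hF.eq_of_forall_notMem_Ioc hm0 hma.le fun r hr hrm => by
        rcases Finset.mem_insert.1 (hcov x hx r hr ⟨hm0.trans_lt hrm.1, hrm.2.trans ha.2⟩)
          with rfl | h
        · exact hax hr
        · exact (Finset.le_max' _ r (Finset.mem_insert_of_mem h)).not_gt hrm.1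
      exact hconst ▸ before m ⟨hm0, hma⟩ x hx
    have hconst : F s x = F a x := hF.eq_of_forall_notMem_Ioc ha.1.le ha.2 fun r hr hrs => by
      rcases Finset.mem_insert.1 (hcov x hx r hr ⟨ha.1.trans hrs.1, hrs.2⟩) with rfl | h
      · exact lt_irrefl r hrs.1
      · exact (hlt r h).not_gt hrs.1
    exact hconst ▸ at_a

end ConstantBetweenRings

theorem Adj.symm {x y : ℤ × ℤ} (h : Adj x y) : Adj y x := by
  unfold Adj at *; omega

theorem mem_nbrs_iff {x y : ℤ × ℤ} : y ∈ nbrs x ↔ Adj y x := by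
  obtain ⟨x₁, x₂⟩ := x
  obtain ⟨y₁, y₂⟩ := y
  simp only [nbrs, List.mem_cons, List.not_mem_nil, or_false, Prod.mk.injEq, Adj]
  omega

theorem onesCount_congr {η η' : Config} {x : ℤ × ℤ} (h : ∀ y, Adj y x → η y = η' y) :
    onesCount η x = onesCount η' x :=
  List.countP_congr fun y hy => by rw [h y (mem_nbrs_iff.1 hy)]

theorem two_le_onesCount {η : Config} {x y z : ℤ × ℤ} (hy : Adj y x) (hz : Adj z x)
    (hyz : y ≠ z) (hηy : η y = true) (hηz : η z = true) : 2 ≤ onesCount η x := by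
  classical
  have hsub : ({y, z} : Finset (ℤ × ℤ)) ⊆ ((nbrs x).filter fun w => η w).toFinset := by
    intro w hw
    rcases Finset.mem_insert.1 hw with rfl | hw
    · simpa [mem_nbrs_iff] using ⟨hy, hηy⟩
    · rw [Finset.mem_singleton.1 hw]
      simpa [mem_nbrs_iff] using ⟨hz, hηz⟩
  calc 2 = ({y, z} : Finset (ℤ × ℤ)).card := (Finset.card_pair hyz).symm
    _ ≤ ((nbrs x).filter fun w => η w).toFinset.card := Finset.card_le_card hsub
    _ ≤ ((nbrs x).filter fun w => η w).length := List.toFinset_card_le _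
    _ = onesCount η x := (List.countP_eq_length_filter ..).symm

theorem majUpdate_of_three_le {η : Config} {x : ℤ × ℤ} (h : 3 ≤ onesCount η x) :
    majUpdate η x = true := by
  simp [majUpdate, h]

theorem majUpdate_of_two_le {η : Config} {x : ℤ × ℤ} (h : 2 ≤ onesCount η x)
    (hx : η x = true) : majUpdate η x = true := by
  unfold majUpdate
  split_ifs
  · rfl
  · omega
  · exact hx

namespace IsMajorityTrajectory

variable {R : (ℤ × ℤ) → Set ℝ} {F : ℝ → Config}

theorem constantBetweenRings (hF : IsMajorityTrajectory R F) : ConstantBetweenRings R F :=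
  hF.1

theorem exists_eq_majUpdate (hF : IsMajorityTrajectory R F) {x : ℤ × ℤ} {r : ℝ}
    (hr : r ∈ R x) (hr₀ : 0 < r) : ∃ u ∈ Ico 0 r, F r x = majUpdate (F u) x := by
  obtain ⟨ε, hε, hupd⟩ := hF.2 x r hr hr₀
  have hu : max 0 (r - ε / 2) < r := max_lt hr₀ (by linarith)
  refine ⟨max 0 (r - ε / 2), ⟨le_max_left _ _, hu⟩, hupd _ ?_ hu⟩
  exact (by linarith : r - ε < r - ε / 2).trans_le (le_max_right _ _)

theorem eq_true_of_quiet_nbrs (hF : IsMajorityTrajectory R F) {x : ℤ × ℤ} {t r₀ : ℝ}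
    (hfin : (R x ∩ Icc 0 t).Finite) (hr₀ : r₀ ∈ R x) (hr₀t : r₀ ∈ Ioc 0 t)
    (hquiet : ∀ y, Adj y x → ∀ r ∈ R y, r ∉ Icc 0 t) (hmaj : 3 ≤ onesCount (F 0) x) :
    F t x = true := by
  obtain ⟨r, hr, hrt, hlast⟩ := hF.constantBetweenRings.exists_last_ring hfin hr₀ hr₀t
  obtain ⟨u, hu, hupd⟩ := hF.exists_eq_majUpdate hr hrt.1
  have hcount : onesCount (F u) x = onesCount (F 0) x := onesCount_congr fun y hy =>
    hF.constantBetweenRings.eq_zero_of_quiet (hquiet y hy) ⟨hu.1, hu.2.le.trans hrt.2⟩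
  rw [hlast, hupd]
  exact majUpdate_of_three_le (hcount ▸ hmaj)

theorem path_block_eq_true (hF : IsMajorityTrajectory R F) {t : ℝ}
    (hfin : ∀ y, (R y ∩ Icc 0 t).Finite) (ht : 0 ≤ t) {x : ℕ → ℤ × ℤ}
    (hpath : ∀ j, Adj (x j) (x (j + 1))) (hinj : Function.Injective x) {m n : ℕ}
    (h₀ : ∀ k, m ≤ k → k ≤ n → F 0 (x k) = true)
    (hm : ∀ r ∈ R (x m), r ∉ Icc 0 t) (hn : ∀ r ∈ R (x n), r ∉ Icc 0 t) :
    ∀ k, m ≤ k → k ≤ n → F t (x k) = true := by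
  have mem : ∀ k, m ≤ k → k ≤ n → x k ∈ (Finset.Icc m n).image x := fun k hmk hkn =>
    Finset.mem_image_of_mem x (Finset.mem_Icc.2 ⟨hmk, hkn⟩)
  intro k hmk hkn
  refine hF.constantBetweenRings.forall_true_of_rings_preserve ((Finset.Icc m n).image x)
    (fun y _ => hfin y) ?_ ?_ t ⟨ht, le_rfl⟩ (x k) (mem k hmk hkn)
  · simp only [Finset.mem_image, Finset.mem_Icc]
    rintro _ ⟨k, hk, rfl⟩
    exact h₀ k hk.1 hk.2
  · intro _ hy r hr hrt before
    obtain ⟨k, hk, rfl⟩ := Finset.mem_image.1 hy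
    obtain ⟨hmk, hkn⟩ := Finset.mem_Icc.1 hk
    have hmk' : m < k := hmk.lt_of_ne (by rintro rfl; exact hm r hr (Ioc_subset_Icc_self hrt))
    have hkn' : k < n := hkn.lt_of_ne (by rintro rfl; exact hn r hr (Ioc_subset_Icc_self hrt))
    obtain ⟨u, hu, hupd⟩ := hF.exists_eq_majUpdate hr hrt.1
    have hprev : Adj (x (k - 1)) (x k) := by
      simpa [Nat.sub_add_cancel (by omega : 1 ≤ k)] using hpath (k - 1)
    rw [hupd]
    exact majUpdate_of_two_le (two_le_onesCount hprev (hpath k).symm (hinj.ne (by omega))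
      (before u hu _ (mem _ (by omega) (by omega))) (before u hu _ (mem _ (by omega) (by omega))))
      (before u hu _ (mem k hmk hkn))

end IsMajorityTrajectory

theorem enhancement_path_open_general (R : (ℤ × ℤ) → Set ℝ) (F : ℝ → Config)
    (hTraj : IsMajorityTrajectory R F)
    (hLocFin : ∀ x : ℤ × ℤ, ∀ s : ℝ, (R x ∩ Set.Icc 0 s).Finite)
    (t : ℝ) (ht : 0 < t)
    (x : ℕ → ℤ × ℤ) (hpath : ∀ j, Adj (x j) (x (j + 1))) (hinj : Function.Injective x)
    (enh : ℕ → Prop)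
    -- there are infinitely many enhanced sites, so every block is finite
    (hinfinite : ∀ j, ∃ j', j < j' ∧ enh j')
    -- within each block every site has value 1 at time 0
    (hblock : ∀ j, ¬ enh j → F 0 (x j) = true)
    -- the first and last sites of each block have no clock ring in [0,t]
    (hends : ∀ j, ¬ enh j → ((j = 0 ∨ enh (j - 1)) ∨ enh (j + 1)) →
      ∀ r ∈ R (x j), r ∉ Set.Icc 0 t)
    -- each enhanced site's clock rings before t …
    (hring : ∀ j, enh j → ∃ r ∈ R (x j), 0 < r ∧ r < t)
    -- … while all four of its neighbors' clocks ring only after t …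
    (hquiet : ∀ j, enh j → ∀ y, Adj y (x j) → ∀ r ∈ R y, r ∉ Set.Icc 0 t)
    -- … and at least three of its neighbors have value 1 at time 0
    (hmaj : ∀ j, enh j → 3 ≤ onesCount (F 0) (x j))
    (j₀ : ℕ) (hj₀ : enh j₀) :
    ∀ j, j₀ ≤ j → F t (x j) = true := by
  classical
  intro j hj
  by_cases hje : enh j
  · obtain ⟨r, hr, hr₀, hrt⟩ := hring j hje
    exact hTraj.eq_true_of_quiet_nbrs (hLocFin _ t) hr ⟨hr₀, hrt.le⟩ (hquiet j hje) (hmaj j hje)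
  -- `j` lies in the block between the enhanced sites `a < j < b` nearest to it
  set a := Nat.findGreatest enh j
  set b := Nat.find (hinfinite j)
  obtain ⟨hjb, hb⟩ : j < b ∧ enh b := Nat.find_spec (hinfinite j)
  have ha : enh a := Nat.findGreatest_spec hj hj₀
  have haj : a < j := (Nat.findGreatest_le j).lt_of_ne fun h => hje (h ▸ ha)
  have hab : ∀ k, a < k → k < b → ¬ enh k := fun k hak hkb hk =>
    (le_or_gt k j).elim (Nat.findGreatest_is_greatest hak · hk)
      (fun hjk => Nat.find_min (hinfinite j) hkb ⟨hjk, hk⟩)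
  refine hTraj.path_block_eq_true (fun y => hLocFin y t) ht.le hpath hinj (m := a + 1)
    (n := b - 1) (fun k _ _ => hblock k (hab k (by omega) (by omega))) ?_ ?_ j (by omega) (by omega)
  · exact hends (a + 1) (hab _ (by omega) (by omega)) (Or.inl (Or.inr (by simpa using ha)))
  · refine hends (b - 1) (hab _ (by omega) (by omega)) (Or.inr ?_)
    rwa [Nat.sub_add_cancel (by omega)]

/-- The enhancement path argument: let `x₀, x₁, …` be a nearest-neighbor path decomposing into
finite blocks of sites that are open at time 0 and whose endpoint sites have no clock ring in
`[0,t]`, separated by single "enhanced" sites whose clock rings in `(0,t)`, whose four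
neighbors have no ring in `[0,t]`, and which have at least three neighbors open at time `0`.
Then from the first enhanced index `j₀` onwards, every site of the path is open at time `t`. -/
theorem enhancement_path_open (R : (ℤ × ℤ) → Set ℝ) (F : ℝ → Config)
    (hTraj : IsMajorityTrajectory R F)
    (hLocFin : ∀ x : ℤ × ℤ, ∀ s : ℝ, (R x ∩ Set.Icc 0 s).Finite)
    (t : ℝ) (ht : 0 < t)
    (x : ℕ → ℤ × ℤ) (hpath : ∀ j, Adj (x j) (x (j + 1))) (hinj : Function.Injective x)
    (enh : ℕ → Prop)
    -- enhanced sites are isolated along the path (blocks separate consecutive enhanced sites)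
    (hiso : ∀ j, enh j → ¬ enh (j + 1))
    -- there are infinitely many enhanced sites, so every block is finite
    (hinfinite : ∀ j, ∃ j', j < j' ∧ enh j')
    -- within each block every site has value 1 at time 0
    (hblock : ∀ j, ¬ enh j → F 0 (x j) = true)
    -- the first and last sites of each block have no clock ring in [0,t]
    (hends : ∀ j, ¬ enh j → ((j = 0 ∨ enh (j - 1)) ∨ enh (j + 1)) →
      ∀ r ∈ R (x j), r ∉ Set.Icc 0 t)
    -- each enhanced site's clock rings before t …
    (hring : ∀ j, enh j → ∃ r ∈ R (x j), 0 < r ∧ r < t)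
    -- … while all four of its neighbors' clocks ring only after t …
    (hquiet : ∀ j, enh j → ∀ y, Adj y (x j) → ∀ r ∈ R y, r ∉ Set.Icc 0 t)
    -- … and at least three of its neighbors have value 1 at time 0
    (hmaj : ∀ j, enh j → 3 ≤ onesCount (F 0) (x j))
    (j₀ : ℕ) (hj₀ : enh j₀) :
    ∀ j, j₀ ≤ j → F t (x j) = true :=
  enhancement_path_open_general R F hTraj hLocFin t ht x hpath hinj enh hinfinite hblock hends hring
    hquiet hmaj j₀ hj₀
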